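/- Let 0 < r < 1, let G ⊆ ℂ be a bounded domain with r𝔻 ⊆ G ⊆ 𝔻, let 0 < ε < r²/4, and set G²_ε = { (z₁,z₂) ∈ G² : |z₁ z₂| < ε }. Let x ∈ G be such that (x,x) ∈ G²_ε and |x| > 2ε/r. Then for every a ∈ ℂ such that the linear map z ↦ a(z₁ + z₂) sends G²_ε into 𝔻, one has ρ(0, 2ax) < c_{G²_ε}((0,0), (x,x)). In particular, no map of the form z ↦ a(z₁ + z₂) is extremal for the Carathéodory pseudo-distance between (0,0) and (x,x). -/

import Mathlib

open scoped ENNReal BigOperators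

/-- The inverse hyperbolic tangent, `arctanh t = (1/2) log ((1+t)/(1-t))`. -/
noncomputable def arctanh (t : ℝ) : ℝ := (1 / 2) * Real.log ((1 + t) / (1 - t))

/-- The Poincaré distance on the unit disc:
`ρ(a,b) = arctanh (|a - b| / |1 - conj a * b|)`. -/
noncomputable def rho (a b : ℂ) : ℝ :=
  arctanh (‖a - b‖ / ‖1 - (starRingEnd ℂ) a * b‖)

/-- The open unit disc in `ℂ`. -/
def uDisc : Set ℂ := Metric.ball 0 1

/-- The domain `G^n_ε = { z ∈ Gⁿ : |z₁ ⋯ z_n| < ε }` inside `ℂⁿ`. -/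
def polyDom (n : ℕ) (G : Set ℂ) (ε : ℝ) : Set (Fin n → ℂ) :=
  { z | (∀ i, z i ∈ G) ∧ ‖∏ i, z i‖ < ε }

/-- The Carathéodory pseudo-distance of an open set `M ⊆ ℂⁿ`:
the supremum of `ρ (g x) (g y)` over holomorphic `g : M → 𝔻`. -/
noncomputable def cara {n : ℕ} (M : Set (Fin n → ℂ)) (x y : Fin n → ℂ) : ℝ :=
  sSup { d | ∃ g : (Fin n → ℂ) → ℂ,
    DifferentiableOn ℂ g M ∧ (∀ z ∈ M, g z ∈ uDisc) ∧ d = rho (g x) (g y) }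

/-- The Lempert function of an open set `M ⊆ ℂⁿ`, with values in `[0,∞]`:
the infimum of `ρ(a,b)` over holomorphic discs `f : 𝔻 → M` with `f a = x`, `f b = y`. -/
noncomputable def lempert {n : ℕ} (M : Set (Fin n → ℂ)) (x y : Fin n → ℂ) : ℝ≥0∞ :=
  sInf { d | ∃ (f : ℂ → Fin n → ℂ) (a b : ℂ),
    a ∈ uDisc ∧ b ∈ uDisc ∧ DifferentiableOn ℂ f uDisc ∧
    (∀ z ∈ uDisc, f z ∈ M) ∧ f a = x ∧ f b = y ∧ d = ENNReal.ofReal (rho a b) }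

/-- The `m`-chain Kobayashi distance `k^{(m)}_M(x,y)` of an open set `M ⊆ ℂⁿ`,
with values in `[0,∞]`: the infimum over chains `x = p₀, …, p_m = y` in `M`,
holomorphic discs `fᵢ : 𝔻 → M` and points `aᵢ, bᵢ ∈ 𝔻` with `fᵢ aᵢ = p_{i-1}`,
`fᵢ bᵢ = pᵢ`, of `∑ ρ(aᵢ, bᵢ)`. -/
noncomputable def kChain {n : ℕ} (M : Set (Fin n → ℂ)) (m : ℕ) (x y : Fin n → ℂ) : ℝ≥0∞ :=
  sInf { d | ∃ (p : Fin (m + 1) → Fin n → ℂ) (f : Fin m → ℂ → Fin n → ℂ)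
      (a b : Fin m → ℂ),
    p 0 = x ∧ p (Fin.last m) = y ∧ (∀ i, p i ∈ M) ∧
    (∀ i : Fin m, a i ∈ uDisc ∧ b i ∈ uDisc ∧
      DifferentiableOn ℂ (f i) uDisc ∧ (∀ z ∈ uDisc, f i z ∈ M) ∧
      f i (a i) = p i.castSucc ∧ f i (b i) = p i.succ) ∧
    d = ∑ i : Fin m, ENNReal.ofReal (rho (a i) (b i)) }

/-- The Kobayashi pseudo-distance `k_M = inf_{m ≥ 1} k^{(m)}_M`. -/
noncomputable def kobayashi {n : ℕ} (M : Set (Fin n → ℂ)) (x y : Fin n → ℂ) : ℝ≥0∞ :=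
  ⨅ m : ℕ, kChain M (m + 1) x y

/-- The point `X = (x, …, x, 0) ∈ ℂⁿ`. -/
def Xpt (n : ℕ) (x : ℂ) : Fin n → ℂ := fun i => if (i : ℕ) < n - 1 then x else 0

/-- The point `Y = (0, y, …, y) ∈ ℂⁿ`. -/
def Ypt (n : ℕ) (y : ℂ) : Fin n → ℂ := fun i => if (i : ℕ) = 0 then 0 else y

/-!
Compare the linear map with the competitor `g z = z₁ z₂ / ε`, which sends `G²_ε` into `𝔻`.
Testing the linear map on the axis `{(t, 0) : |t| < r}` gives `|a| ≤ 1/r`, so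
`|2ax| ≤ 2|x|/r < |x|²/ε = |g(x,x)|` exactly because `|x| > 2ε/r`; hence
`ρ(0, 2ax) < ρ(g(0,0), g(x,x)) ≤ c_{G²_ε}((0,0),(x,x))`.
The last inequality needs the set of competitors to be bounded above (otherwise `sSup` is `0`):
the holomorphic disc `w ↦ (√ε w, √ε w)` through `(0,0)` and `(x,x)` bounds it by Schwarz–Pick.
-/

open Set Complex ComplexConjugate

theorem arctanh_strictMonoOn : StrictMonoOn arctanh (Ioo (-1) 1) :=
  Real.strictMonoOn_artanh.congr fun _ ht => Real.artanh_eq_half_log (Ioo_subset_Icc_self ht)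

theorem rho_zero_left (w : ℂ) : rho 0 w = arctanh ‖w‖ := by
  simp [rho]

theorem rho_zero_lt_rho_zero {v w : ℂ} (hvw : ‖v‖ < ‖w‖) (hw : ‖w‖ < 1) :
    rho 0 v < rho 0 w := by
  rw [rho_zero_left, rho_zero_left]
  exact arctanh_strictMonoOn ⟨by linarith [norm_nonneg v], by linarith⟩
    ⟨by linarith [norm_nonneg v], hw⟩ hvw

theorem normSq_one_sub_conj_mul_sub_normSq_sub (a b : ℂ) :
    normSq (1 - conj a * b) - normSq (a - b) = (1 - normSq a) * (1 - normSq b) := by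
  simp only [normSq_apply, sub_re, sub_im, one_re, one_im, mul_re, mul_im, conj_re, conj_im]
  ring

theorem norm_sub_lt_norm_one_sub_conj_mul {a b : ℂ} (ha : ‖a‖ < 1) (hb : ‖b‖ < 1) :
    ‖a - b‖ < ‖1 - conj a * b‖ := by
  rw [← pow_lt_pow_iff_left₀ (norm_nonneg _) (norm_nonneg _) two_ne_zero, Complex.sq_norm,
    Complex.sq_norm]
  have ha' : normSq a < 1 := by rw [← Complex.sq_norm]; nlinarith [norm_nonneg a]
  have hb' : normSq b < 1 := by rw [← Complex.sq_norm]; nlinarith [norm_nonneg b]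
  nlinarith [normSq_one_sub_conj_mul_sub_normSq_sub a b, mul_pos (sub_pos.2 ha') (sub_pos.2 hb')]

/-- Schwarz–Pick at the origin. -/
theorem rho_le_rho_zero_of_mapsTo {h : ℂ → ℂ} (hd : DifferentiableOn ℂ h uDisc)
    (hm : MapsTo h uDisc uDisc) {c : ℂ} (hc : c ∈ uDisc) :
    rho (h 0) (h c) ≤ rho 0 c := by
  have hnorm : ∀ w ∈ uDisc, ‖h w‖ < 1 := fun w hw => mem_ball_zero_iff.1 (hm hw)
  have h0 : ‖h 0‖ < 1 := hnorm 0 (Metric.mem_ball_self one_pos)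
  have hden : ∀ w ∈ uDisc, 0 < ‖1 - conj (h 0) * h w‖ := fun w hw =>
    (norm_nonneg _).trans_lt (norm_sub_lt_norm_one_sub_conj_mul h0 (hnorm w hw))
  set F : ℂ → ℂ := fun w => (h w - h 0) / (1 - conj (h 0) * h w)
  have hFd : DifferentiableOn ℂ F uDisc :=
    (hd.sub_const _).div ((differentiableOn_const _).sub (hd.const_mul _))
      fun w hw => norm_pos_iff.1 (hden w hw)
  have hFm : MapsTo F uDisc (Metric.closedBall 0 1) := fun w hw => by
    rw [mem_closedBall_zero_iff, norm_div, div_le_one (hden w hw), norm_sub_rev]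
    exact (norm_sub_lt_norm_one_sub_conj_mul h0 (hnorm w hw)).le
  have hFc : ‖F c‖ ≤ ‖c‖ :=
    norm_le_norm_of_mapsTo_ball hFd hFm (by simp [F]) (mem_ball_zero_iff.1 hc)
  have hrho : rho (h 0) (h c) = arctanh ‖F c‖ := by
    rw [rho, norm_div, norm_sub_rev (h c)]
  rw [hrho, rho_zero_left]
  have hc' : ‖c‖ < 1 := mem_ball_zero_iff.1 hc
  exact arctanh_strictMonoOn.monotoneOn ⟨by linarith [norm_nonneg (F c)], by linarith⟩
    ⟨by linarith [norm_nonneg c], hc'⟩ hFc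

theorem rho_le_cara_of_disc {n : ℕ} {M : Set (Fin n → ℂ)} {φ : ℂ → Fin n → ℂ}
    (hφ : DifferentiableOn ℂ φ uDisc) (hφM : MapsTo φ uDisc M) {c : ℂ} (hc : c ∈ uDisc)
    {g : (Fin n → ℂ) → ℂ} (hg : DifferentiableOn ℂ g M) (hgM : MapsTo g M uDisc) :
    rho (g (φ 0)) (g (φ c)) ≤ cara M (φ 0) (φ c) := by
  refine le_csSup ⟨rho 0 c, ?_⟩ ⟨g, hg, fun _ hz => hgM hz, rfl⟩
  rintro _ ⟨f, hf, hfM, rfl⟩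
  exact rho_le_rho_zero_of_mapsTo (hf.comp hφ hφM) (fun _ hw => hfM _ (hφM hw)) hc

theorem prod_div_mapsTo_polyDom {n : ℕ} {G : Set ℂ} {ε : ℝ} (hε : 0 < ε) :
    MapsTo (fun z : Fin n → ℂ => (∏ i, z i) / ε) (polyDom n G ε) uDisc := fun z hz => by
  rw [uDisc, mem_ball_zero_iff, norm_div, norm_real, Real.norm_of_nonneg hε.le, div_lt_one hε]
  exact hz.2

theorem const_mem_polyDom_two {G : Set ℂ} {ε : ℝ} {w : ℂ} (hw : w ∈ G) (hwε : ‖w‖ ^ 2 < ε) :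
    (fun _ => w) ∈ polyDom 2 G ε :=
  ⟨fun _ => hw, by rwa [Fin.prod_univ_two, norm_mul, ← sq]⟩

theorem diag_mapsTo_polyDom_two {G : Set ℂ} {ε : ℝ} (hε : 0 < ε)
    (hG : Metric.ball 0 √ε ⊆ G) :
    MapsTo (fun w _ => (√ε : ℂ) * w) uDisc (polyDom 2 G ε) := fun w hw => by
  have hw : ‖w‖ < 1 := mem_ball_zero_iff.1 hw
  have hnorm : ‖(√ε : ℂ) * w‖ = √ε * ‖w‖ := by
    rw [norm_mul, norm_real, Real.norm_of_nonneg (Real.sqrt_nonneg ε)]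
  refine const_mem_polyDom_two (hG ?_) ?_
  · rw [mem_ball_zero_iff, hnorm]
    exact mul_lt_of_lt_one_right (Real.sqrt_pos.2 hε) hw
  · rw [hnorm, mul_pow, Real.sq_sqrt hε.le]
    exact mul_lt_of_lt_one_right hε (pow_lt_one₀ (norm_nonneg _) hw two_ne_zero)

theorem norm_mul_le_one_of_linear_mapsTo {G : Set ℂ} {r ε : ℝ} (hrG : Metric.ball 0 r ⊆ G)
    (hε : 0 < ε) {a : ℂ} (ha : ∀ z ∈ polyDom 2 G ε, a * (z 0 + z 1) ∈ uDisc) :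
    r * ‖a‖ ≤ 1 := by
  by_contra! h
  have hr : 0 < r := by nlinarith [norm_nonneg a]
  have ha0 : 0 < ‖a‖ := by nlinarith [norm_nonneg a]
  have hz : ![(‖a‖⁻¹ : ℂ), 0] ∈ polyDom 2 G ε := by
    refine ⟨fun i => hrG ?_, by simpa using hε⟩
    fin_cases i
    · simpa using (inv_lt_iff_one_lt_mul₀ ha0).2 (by linarith)
    · simpa using hr
  have := mem_ball_zero_iff.1 (ha _ hz)
  simp [ha0.ne'] at this

theorem rho_zero_sq_div_le_cara {G : Set ℂ} {ε : ℝ} (hε : 0 < ε)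
    (hG : Metric.ball 0 √ε ⊆ G) {x : ℂ} (hx : ‖x‖ ^ 2 < ε) :
    rho 0 (x * x / ε) ≤ cara (polyDom 2 G ε) 0 (fun _ => x) := by
  have hsqrt : 0 < √ε := Real.sqrt_pos.2 hε
  have hc : x / √ε ∈ uDisc := by
    rw [uDisc, mem_ball_zero_iff, norm_div, norm_real, Real.norm_of_nonneg hsqrt.le,
      div_lt_one hsqrt]
    exact Real.lt_sqrt (norm_nonneg x) |>.2 hx
  have hφ : DifferentiableOn ℂ (fun w (_ : Fin 2) => (√ε : ℂ) * w) uDisc := by fun_prop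
  have hg : DifferentiableOn ℂ (fun z : Fin 2 → ℂ => (∏ i, z i) / ε) (polyDom 2 G ε) := by
    fun_prop
  have h := rho_le_cara_of_disc hφ (diag_mapsTo_polyDom_two hε hG) hc hg
    (prod_div_mapsTo_polyDom hε)
  simp only [mul_zero, mul_div_cancel₀ _ (ofReal_ne_zero.2 hsqrt.ne'), Fin.prod_univ_two,
    zero_div] at h
  exact h

theorem norm_two_mul_mul_lt_sq_div {r ε : ℝ} (hr : 0 < r) (hε : 0 < ε) {a x : ℂ}
    (ha : r * ‖a‖ ≤ 1) (hx : 2 * ε / r < ‖x‖) :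
    ‖2 * a * x‖ < ‖x‖ ^ 2 / ε := by
  have hεx : 2 * ε < ‖x‖ * r := by rwa [div_lt_iff₀ hr] at hx
  have hx0 : 0 < ‖x‖ := (by positivity : 0 < 2 * ε / r).trans hx
  rw [norm_mul, norm_mul, Complex.norm_two, lt_div_iff₀ hε]
  refine lt_of_mul_lt_mul_left ?_ hr.le
  calc r * (2 * ‖a‖ * ‖x‖ * ε) = (r * ‖a‖) * (2 * ε * ‖x‖) := by ring
    _ ≤ 2 * ε * ‖x‖ := mul_le_of_le_one_left (by positivity) ha
    _ < ‖x‖ * r * ‖x‖ := mul_lt_mul_of_pos_right hεx hx0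
    _ = r * ‖x‖ ^ 2 := by ring

theorem linear_not_extremal_general (r : ℝ) (hr0 : 0 < r)
    (G : Set ℂ)
    (hrG : Metric.ball (0 : ℂ) r ⊆ G)
    (ε : ℝ) (hε0 : 0 < ε) (hε : ε < r ^ 2 / 4)
    (x : ℂ) (hmem : (fun _ : Fin 2 => x) ∈ polyDom 2 G ε)
    (hxr : 2 * ε / r < ‖x‖) :
    ∀ a : ℂ, (∀ z ∈ polyDom 2 G ε, a * (z 0 + z 1) ∈ uDisc) →
      rho 0 (2 * a * x) < cara (polyDom 2 G ε) 0 (fun _ => x) := by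
  intro a ha
  have hra : r * ‖a‖ ≤ 1 := norm_mul_le_one_of_linear_mapsTo hrG hε0 ha
  have hx : ‖x‖ ^ 2 < ε := by simpa [Fin.prod_univ_two, sq] using hmem.2
  have hsqrt : √ε < r := by
    rw [Real.sqrt_lt' hr0]
    nlinarith
  have hnorm : ‖x * x / ε‖ = ‖x‖ ^ 2 / ε := by
    rw [norm_div, norm_mul, norm_real, Real.norm_of_nonneg hε0.le, sq]
  calc rho 0 (2 * a * x) < rho 0 (x * x / ε) := by
        refine rho_zero_lt_rho_zero ?_ ?_ <;> rw [hnorm]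
        · exact norm_two_mul_mul_lt_sq_div hr0 hε0 hra hxr
        · rwa [div_lt_one hε0]
    _ ≤ cara (polyDom 2 G ε) 0 (fun _ => x) :=
        rho_zero_sq_div_le_cara hε0 ((Metric.ball_subset_ball hsqrt.le).trans hrG) hx

/-- no map of the form `z ↦ a(z₁ + z₂)` sending `G²_ε` into `𝔻`
is extremal for the Carathéodory pseudo-distance between `(0,0)` and `(x,x)`:
one always has `ρ(0, 2ax) < c_{G²_ε}((0,0),(x,x))`. -/
theorem linear_not_extremal (r : ℝ) (hr0 : 0 < r) (hr1 : r < 1)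
    (G : Set ℂ) (hGopen : IsOpen G) (hGconn : IsConnected G)
    (hGbdd : Bornology.IsBounded G)
    (hrG : Metric.ball (0 : ℂ) r ⊆ G) (hG1 : G ⊆ Metric.ball (0 : ℂ) 1)
    (ε : ℝ) (hε0 : 0 < ε) (hε : ε < r ^ 2 / 4)
    (x : ℂ) (hxG : x ∈ G) (hmem : (fun _ : Fin 2 => x) ∈ polyDom 2 G ε)
    (hxr : 2 * ε / r < ‖x‖) :
    ∀ a : ℂ, (∀ z ∈ polyDom 2 G ε, a * (z 0 + z 1) ∈ uDisc) →
      rho 0 (2 * a * x) < cara (polyDom 2 G ε) 0 (fun _ => x) :=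
  linear_not_extremal_general r hr0 G hrG ε hε0 hε x hmem hxr
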